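/- Let D : A → A/J be a ℂ-linear map satisfying the Leibniz rule D(f * g) = π(f)·D(g) + D(f)·π(g) for all f, g ∈ A, let φ(s) = D(δ_s)·π(δ_{s*}), and for s ∈ S define T_s : A/J → A/J by T_s(Φ) = π(δ_s)·Φ·π(δ_{s*}) + φ(s). Then the family {T_s : s ∈ S} is a representation of S, i.e. T_{s t}(Φ) = T_s(T_t(Φ)) for all s, t ∈ S and Φ ∈ A/J, and T_s(φ(t)) = φ(s t) for all s, t ∈ S. -/

import Mathlib

/-!
Idempotents of an inverse semigroup commute; hence `(s t)* = t* s*`, and `δ_{e u} ≡ δ_u`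
modulo `J` for every idempotent `e`. Applying the Leibniz rule to `δ_{s t} = δ_s δ_t` gives the
cocycle identity `φ(s t) = π(δ_s) φ(t) π(δ_{s*}) + φ(s)`, the last term because
`D(δ_s) π(δ_{t t* s*}) = D(δ_s) π(δ_{s*})`. Both claims follow: `T_{s t}` and `T_s ∘ T_t` are
affine maps with the same linear part `Φ ↦ π(δ_s δ_t) Φ π(δ_{t*} δ_{s*})` and, by the
cocycle identity, the same value at `0`.
-/

open MonoidAlgebra

/-- An inverse semigroup: a semigroup in which every element `s` has a unique
generalized inverse `s*` with `s * s* * s = s` and `s* * s * s* = s*`. -/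
class InverseSemigroup (S : Type*) extends Semigroup S where
  star : S → S
  star_left : ∀ s : S, s * star s * s = s
  star_right : ∀ s : S, star s * s * star s = star s
  star_unique : ∀ s t : S, s * t * s = s → t * s * t = t → t = star s

variable (S : Type*) [InverseSemigroup S]

/-- The ℂ-linear span in the semigroup algebra `A = MonoidAlgebra ℂ S` of the set
`{δ_{s e t} - δ_{s t} : s, t ∈ S, e ∈ E}`, where `E = {e : e * e = e}` is the set of
idempotents of `S`. -/
noncomputable def J : Submodule ℂ (MonoidAlgebra ℂ S) :=
  Submodule.span ℂ { x | ∃ s t e : S, e * e = e ∧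
    x = single (s * e * t) (1 : ℂ) - single (s * t) (1 : ℂ) }

variable {S}

theorem mul_mem_J (f : MonoidAlgebra ℂ S) {x : MonoidAlgebra ℂ S} (hx : x ∈ J S) :
    f * x ∈ J S := by
  induction hx using Submodule.span_induction with
  | mem x hx =>
    obtain ⟨s, t, e, he, rfl⟩ := hx
    induction f using MonoidAlgebra.induction_linear with
    | zero => simp
    | add a b ha hb => rw [add_mul]; exact (J S).add_mem ha hb
    | single a b =>
      have : (single a b : MonoidAlgebra ℂ S) *
            (single (s * e * t) (1 : ℂ) - single (s * t) (1 : ℂ))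
          = b • (single ((a * s) * e * t) (1 : ℂ) - single ((a * s) * t) (1 : ℂ)) := by
        rw [mul_sub, single_mul_single, single_mul_single, smul_sub, smul_single', smul_single']
        simp [mul_assoc]
      rw [this]
      exact (J S).smul_mem _ (Submodule.subset_span ⟨a * s, t, e, he, rfl⟩)
  | zero => simp
  | add x y hx hy ihx ihy => rw [mul_add]; exact (J S).add_mem ihx ihy
  | smul c x hx ih => rw [mul_smul_comm]; exact (J S).smul_mem _ ih

theorem J_mul_mem (f : MonoidAlgebra ℂ S) {x : MonoidAlgebra ℂ S} (hx : x ∈ J S) :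
    x * f ∈ J S := by
  induction hx using Submodule.span_induction with
  | mem x hx =>
    obtain ⟨s, t, e, he, rfl⟩ := hx
    induction f using MonoidAlgebra.induction_linear with
    | zero => simp
    | add a b ha hb => rw [mul_add]; exact (J S).add_mem ha hb
    | single a b =>
      have : (single (s * e * t) (1 : ℂ) - single (s * t) (1 : ℂ)) *
            (single a b : MonoidAlgebra ℂ S)
          = b • (single (s * e * (t * a)) (1 : ℂ) - single (s * (t * a)) (1 : ℂ)) := by
        rw [sub_mul, single_mul_single, single_mul_single, smul_sub, smul_single', smul_single']
        simp [mul_assoc]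
      rw [this]
      exact (J S).smul_mem _ (Submodule.subset_span ⟨s, t * a, e, he, rfl⟩)
  | zero => simp
  | add x y hx hy ihx ihy => rw [add_mul]; exact (J S).add_mem ihx ihy
  | smul c x hx ih => rw [smul_mul_assoc]; exact (J S).smul_mem _ ih

/-- Multiplication of cosets in the quotient algebra `A ⧸ J`, well defined
since `J` is a two-sided ideal: `(f + J) * (g + J) = f * g + J`. -/
noncomputable instance : Mul (MonoidAlgebra ℂ S ⧸ J S) :=
  ⟨Quotient.map₂' (· * ·) (by
    intro a₁ a₂ h₁ b₁ b₂ h₂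
    have h₁' : a₁ - a₂ ∈ J S := (Submodule.quotientRel_def (J S)).mp h₁
    have h₂' : b₁ - b₂ ∈ J S := (Submodule.quotientRel_def (J S)).mp h₂
    refine (Submodule.quotientRel_def (J S)).mpr ?_
    have : a₁ * b₁ - a₂ * b₂ = a₁ * (b₁ - b₂) + (a₁ - a₂) * b₂ := by
      rw [mul_sub, sub_mul]; abel
    rw [this]
    exact (J S).add_mem (mul_mem_J _ h₂') (J_mul_mem _ h₁'))⟩

variable (S)

/-- The quotient map `π : A → A ⧸ J`, sending `f` to the coset `f + J`. -/
noncomputable def π : MonoidAlgebra ℂ S → MonoidAlgebra ℂ S ⧸ J S := Submodule.Quotient.mk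

theorem π_mul (f g : MonoidAlgebra ℂ S) : π S (f * g) = π S f * π S g := rfl

variable {S}

namespace InverseSemigroup

variable {e f : S}

theorem mul_star_mul_self (s : S) : s * (star s * s) = s := by
  rw [← mul_assoc, star_left]

theorem star_mul_star_self (s : S) : star s * (s * star s) = star s := by
  rw [← mul_assoc, star_right]

theorem mul_star_mul_mul (s z : S) : s * (star s * (s * z)) = s * z := by
  rw [← mul_assoc, ← mul_assoc, star_left]

theorem star_mul_star_mul (s z : S) : star s * (s * (star s * z)) = star s * z := by
  rw [← mul_assoc, ← mul_assoc, star_right]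

theorem star_eq_self_of_isIdempotentElem (he : IsIdempotentElem e) : star e = e :=
  (star_unique e e (by rw [he.eq, he.eq]) (by rw [he.eq, he.eq])).symm

theorem isIdempotentElem_mul_star (s : S) : IsIdempotentElem (s * star s) := by
  rw [IsIdempotentElem, ← mul_assoc, star_left]

theorem isIdempotentElem_star_mul (s : S) : IsIdempotentElem (star s * s) := by
  rw [IsIdempotentElem, ← mul_assoc, star_right]

/- With `x = (e f)*`, the element `f x e` is another inverse of `e f`, so it equals `x`; this
makes `x` idempotent, hence self-inverse, and therefore `e f = x* = x`. -/
theorem isIdempotentElem_mul (he : IsIdempotentElem e) (hf : IsIdempotentElem f) :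
    IsIdempotentElem (e * f) := by
  set x := star (e * f)
  have hl : e * (f * (x * (e * f))) = e * f := by
    simpa only [mul_assoc] using star_left (e * f)
  have hr : ∀ z, x * (e * (f * (x * z))) = x * z := by
    simpa only [mul_assoc] using star_mul_star_mul (e * f)
  have hfxe : f * x * e = x := star_unique (e * f) (f * x * e)
    (by simp only [mul_assoc, he.mul_self_mul, hf.mul_self_mul, hl])
    (by simp only [mul_assoc, he.mul_self_mul, hf.mul_self_mul, hr])
  have hx : IsIdempotentElem x := by
    rw [IsIdempotentElem, ← hfxe]
    simp only [mul_assoc, hr]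
  have hefx : e * f = x :=
    (star_unique x (e * f) (star_right (e * f)) (star_left (e * f))).trans
      (star_eq_self_of_isIdempotentElem hx)
  rwa [hefx]

theorem commute_of_isIdempotentElem (he : IsIdempotentElem e) (hf : IsIdempotentElem f) :
    Commute e f := by
  have hef := isIdempotentElem_mul he hf
  have hfe := isIdempotentElem_mul hf he
  have hstar : f * e = star (e * f) := star_unique (e * f) (f * e)
    (by simpa only [mul_assoc, he.mul_self_mul, hf.mul_self_mul] using hef.eq)
    (by simpa only [mul_assoc, he.mul_self_mul, hf.mul_self_mul] using hfe.eq)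
  show e * f = f * e
  rw [hstar, star_eq_self_of_isIdempotentElem hef]

theorem star_mul (s t : S) : star (s * t) = star t * star s := by
  have hcomm : Commute (t * star t) (star s * s) :=
    commute_of_isIdempotentElem (isIdempotentElem_mul_star t) (isIdempotentElem_star_mul s)
  refine (star_unique (s * t) (star t * star s) ?_ ?_).symm
  · calc s * t * (star t * star s) * (s * t) = s * ((t * star t) * (star s * s)) * t := by
          simp only [mul_assoc]
      _ = s * t := by
          rw [hcomm.eq]
          simp only [mul_assoc, mul_star_mul_mul, mul_star_mul_self]
  · calc star t * star s * (s * t) * (star t * star s)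
          = star t * ((star s * s) * (t * star t)) * star s := by
          simp only [mul_assoc]
      _ = star t * star s := by
          rw [← hcomm.eq]
          simp only [mul_assoc, star_mul_star_mul, star_mul_star_self]

theorem isIdempotentElem_star_mul_mul (u : S) (he : IsIdempotentElem e) :
    IsIdempotentElem (star u * e * u) := by
  calc star u * e * u * (star u * e * u) = star u * (e * (u * star u)) * (e * u) := by
        simp only [mul_assoc]
    _ = star u * e * u := by
        rw [(commute_of_isIdempotentElem he (isIdempotentElem_mul_star u)).eq]
        simp only [mul_assoc, he.mul_self_mul, star_mul_star_mul]

theorem mul_star_mul_mul_star_mul (u : S) (he : IsIdempotentElem e) :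
    u * (star u * e * u) * (star u * u) = e * u := by
  calc u * (star u * e * u) * (star u * u) = (u * star u) * e * u := by
        simp only [mul_assoc, mul_star_mul_self]
    _ = e * u := by
        rw [← (commute_of_isIdempotentElem he (isIdempotentElem_mul_star u)).eq]
        simp only [mul_assoc, mul_star_mul_self]

end InverseSemigroup

open InverseSemigroup

local notation "δ" s:max => single s (1 : ℂ)

/- Not a global instance: it would be a second source of the additive structure of the quotient,
and the statement below must elaborate `+` through the `Submodule` quotient. -/
noncomputable abbrev quotientNonUnitalRing : NonUnitalRing (MonoidAlgebra ℂ S ⧸ J S) :=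
  (Submodule.Quotient.mk_surjective (J S)).nonUnitalRing _ rfl (fun _ _ => rfl)
    (fun _ _ => rfl) (fun _ => rfl) (fun _ _ => rfl) (fun _ _ => rfl) (fun _ _ => rfl)

section QuotientRing

attribute [local instance] quotientNonUnitalRing

theorem π_single_mul_π_single (a b : S) : π S (δ a) * π S (δ b) = π S (δ (a * b)) := by
  rw [← π_mul, single_mul_single, one_mul]

/- `δ_{e u} - δ_u` is a generator of `J`: `e u = u (u* e u) (u* u)` and `u = u (u* u)`. -/
theorem π_single_idempotent_mul {e : S} (he : IsIdempotentElem e) (u : S) :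
    π S (δ (e * u)) = π S (δ u) :=
  (Submodule.Quotient.eq _).mpr <| Submodule.subset_span
    ⟨u, star u * u, star u * e * u, isIdempotentElem_star_mul_mul u he,
      by rw [mul_star_mul_mul_star_mul u he, mul_star_mul_self]⟩

theorem leibniz_single_mul_π_star (D : MonoidAlgebra ℂ S → MonoidAlgebra ℂ S ⧸ J S)
    (hD : ∀ f g : MonoidAlgebra ℂ S, D (f * g) = π S f * D g + D f * π S g) (s t : S) :
    D (δ (s * t)) * π S (δ (star (s * t))) =
      π S (δ s) * (D (δ t) * π S (δ (star t))) * π S (δ (star s)) +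
        D (δ s) * π S (δ (star s)) := by
  calc D (δ (s * t)) * π S (δ (star (s * t)))
      = (π S (δ s) * D (δ t) + D (δ s) * π S (δ t)) *
          (π S (δ (star t)) * π S (δ (star s))) := by
        rw [← hD, single_mul_single, one_mul, InverseSemigroup.star_mul, π_single_mul_π_single]
    _ = π S (δ s) * (D (δ t) * π S (δ (star t))) * π S (δ (star s)) +
          D (δ s) * π S (δ (t * star t * star s)) := by
        simp only [add_mul, mul_assoc, π_single_mul_π_single]
    _ = _ := by rw [π_single_idempotent_mul (isIdempotentElem_mul_star t)]

end QuotientRing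

/-- with `D`, `φ` as before and `T_s(Φ) = π(δ_s) · Φ · π(δ_{s*}) + φ(s)`,
the family `{T_s : s ∈ S}` is a representation of `S`: `T_{s t}(Φ) = T_s(T_t(Φ))` for all
`s, t ∈ S`, `Φ ∈ A ⧸ J`; moreover `T_s(φ(t)) = φ(s t)`. -/
theorem T_is_representation
    (D : MonoidAlgebra ℂ S →ₗ[ℂ] MonoidAlgebra ℂ S ⧸ J S)
    (hD : ∀ f g : MonoidAlgebra ℂ S, D (f * g) = π S f * D g + D f * π S g)
    (φ : S → MonoidAlgebra ℂ S ⧸ J S)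
    (hφ : ∀ s : S, φ s = D (single s (1 : ℂ)) * π S (single (InverseSemigroup.star s) (1 : ℂ)))
    (T : S → (MonoidAlgebra ℂ S ⧸ J S) → MonoidAlgebra ℂ S ⧸ J S)
    (hT : ∀ (s : S) (Φ : MonoidAlgebra ℂ S ⧸ J S),
      T s Φ = π S (single s (1 : ℂ)) * Φ * π S (single (InverseSemigroup.star s) (1 : ℂ)) + φ s)
 :
    (∀ (s t : S) (Φ : MonoidAlgebra ℂ S ⧸ J S), T (s * t) Φ = T s (T t Φ)) ∧
    (∀ s t : S, T s (φ t) = φ (s * t)) := by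
  let _ := quotientNonUnitalRing (S := S)
  have hφ_mul : ∀ s t, φ (s * t) = π S (δ s) * φ t * π S (δ (star s)) + φ s := fun s t => by
    simpa only [← hφ] using leibniz_single_mul_π_star D hD s t
  refine ⟨fun s t Φ => ?_, fun s t => by rw [hT, hφ_mul]⟩
  rw [hT, hT, hT, hφ_mul, InverseSemigroup.star_mul, ← π_single_mul_π_single,
    ← π_single_mul_π_single]
  simp only [mul_add, add_mul, mul_assoc, add_assoc]
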